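/- Let K be a number field of degree 2 over ℚ containing an element ω with ω² = Δ, where Δ is a positive integer that is not a perfect square with Δ ≡ 0 or 1 (mod 4). Let a and b be integers with a ≠ 0 and 4a ∣ b² − Δ, and set θ = (b + ω)/2 ∈ K. Then the ℤ-submodule M of K spanned by {a, θ} is closed under multiplication by θ (and hence is a module over the order ℤ[θ]), and the quotient of the ℤ-submodule spanned by {1, θ} by M is finite of cardinality |a|. -/

import Mathlib

/-!
From `b² - Δ = 4ac` and `2θ - b = ω` one gets `θ² = bθ - ac`, so `θ·a` and `θ·θ` lie in
`M = ⟨a, θ⟩`. Since `ω` is irrational, `1, θ` is a `ℤ`-basis of `N`; as `θ ∈ M`, the map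
`r ↦ r·1` then induces `ℤ/aℤ ≃ N/M`.
-/

open Submodule

section SpanPairQuotient

variable {R M : Type*} [CommRing R] [AddCommGroup M] [Module R M]

abbrev SpanPairQuotient (x y : M) (a : R) : Type _ :=
  span R {x, y} ⧸ (span R {a • x, y}).comap (span R {x, y}).subtype

noncomputable def spanPairQuotientOfScalar (x y : M) (a : R) : R →ₗ[R] SpanPairQuotient x y a :=
  mkQ _ ∘ₗ LinearMap.toSpanSingleton R _ ⟨x, subset_span (by simp)⟩

theorem spanPairQuotientOfScalar_surjective (x y : M) (a : R) :
    Function.Surjective (spanPairQuotientOfScalar x y a) := by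
  rintro ⟨z, hz⟩
  obtain ⟨s, t, rfl⟩ := mem_span_pair.1 hz
  refine ⟨s, (Submodule.Quotient.eq _).2 ?_⟩
  simp only [mem_comap, subtype_apply, AddSubgroupClass.coe_sub, LinearMap.toSpanSingleton_apply,
    SetLike.val_smul]
  simpa using smul_mem _ (-t) (subset_span (by simp) : y ∈ span R {a • x, y})

theorem ker_spanPairQuotientOfScalar {x y : M} (hxy : LinearIndependent R ![x, y]) (a : R) :
    LinearMap.ker (spanPairQuotientOfScalar x y a) = Ideal.span {a} := by
  ext r
  simp only [spanPairQuotientOfScalar, LinearMap.mem_ker, LinearMap.coe_comp, Function.comp_apply,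
    mkQ_apply, Quotient.mk_eq_zero, mem_comap, subtype_apply, LinearMap.toSpanSingleton_apply,
    SetLike.val_smul, mem_span_pair, Ideal.mem_span_singleton']
  constructor
  · rintro ⟨s, t, h⟩
    refine ⟨s, (LinearIndependent.pair_iff.1 hxy (s * a - r) t ?_).1 |> sub_eq_zero.1⟩
    rw [sub_smul, mul_smul, ← h]
    abel
  · rintro ⟨s, rfl⟩
    exact ⟨s, 0, by simp [mul_smul]⟩

noncomputable def spanPairQuotientEquiv {x y : M} (hxy : LinearIndependent R ![x, y]) (a : R) :
    SpanPairQuotient x y a ≃ₗ[R] R ⧸ Ideal.span {a} :=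
  ((LinearMap.quotKerEquivOfSurjective _ (spanPairQuotientOfScalar_surjective x y a)).symm.trans
    (quotEquivOfEq _ _ (ker_spanPairQuotientOfScalar hxy a)))

end SpanPairQuotient

theorem natCard_spanPairQuotient {M : Type*} [AddCommGroup M] {x y : M}
    (hxy : LinearIndependent ℤ ![x, y]) (a : ℤ) :
    Nat.card (SpanPairQuotient x y a) = a.natAbs := by
  rw [Nat.card_congr ((spanPairQuotientEquiv hxy a).toEquiv.trans
    (Int.quotientSpanEquivZMod a).toEquiv), Nat.card_zmod]

theorem finite_spanPairQuotient {M : Type*} [AddCommGroup M] {x y : M}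
    (hxy : LinearIndependent ℤ ![x, y]) {a : ℤ} (ha : a ≠ 0) :
    Finite (SpanPairQuotient x y a) :=
  have : NeZero a := ⟨ha⟩
  .of_equiv _ (spanPairQuotientEquiv hxy a).toEquiv.symm

theorem mul_mem_span_intCast_pair {S : Type*} [CommRing S] {θ : S} {a b c : ℤ}
    (hθ : θ ^ 2 = b * θ - a * c) {x : S} (hx : x ∈ span ℤ {(a : S), θ}) :
    θ * x ∈ span ℤ {(a : S), θ} := by
  suffices span ℤ {(a : S), θ} ≤ (span ℤ {(a : S), θ}).comap (LinearMap.mulLeft ℤ θ) from this hx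
  rw [span_le, Set.insert_subset_iff, Set.singleton_subset_iff]
  refine ⟨mem_span_pair.2 ⟨0, a, ?_⟩, mem_span_pair.2 ⟨-c, b, ?_⟩⟩
  · simp [mul_comm]
  · simp only [LinearMap.mulLeft_apply, zsmul_eq_mul, Int.cast_neg]
    linear_combination -hθ

theorem ratCast_ne_of_sq_eq_of_not_isSquare {K : Type*} [Field K] [CharZero K] {ω : K} {Δ : ℤ}
    (hω : ω ^ 2 = Δ) (hΔ : ¬IsSquare Δ) (q : ℚ) : (q : K) ≠ ω := by
  rintro rfl
  refine hΔ (Rat.isSquare_intCast_iff.1 ⟨q, ?_⟩)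
  exact_mod_cast hω.symm.trans (sq _)

theorem linearIndependent_one_half_add {K : Type*} [Field K] [CharZero K] {ω : K} {Δ : ℤ}
    (hω : ω ^ 2 = Δ) (hΔ : ¬IsSquare Δ) (b : ℤ) :
    LinearIndependent ℤ ![1, ((b : K) + ω) / 2] := by
  refine LinearIndependent.pair_iff.2 fun s t h => ?_
  have ht : t = 0 := by
    by_contra ht
    refine ratCast_ne_of_sq_eq_of_not_isSquare hω hΔ (-(2 * s + t * b) / t) ?_
    have htK : (t : K) ≠ 0 := by exact_mod_cast ht
    push_cast
    rw [div_eq_iff htK]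
    simp only [zsmul_eq_mul] at h
    linear_combination -2 * h
  subst ht
  simpa using h

theorem ideal_module_index_general
    (K : Type*) [Field K] [NumberField K]
    (Δ : ℤ) (hΔns : ¬ IsSquare Δ)
    (ω : K) (hω : ω ^ 2 = (Δ : K))
    (a b : ℤ) (ha : a ≠ 0) (hdiv : 4 * a ∣ b ^ 2 - Δ)
    (θ : K) (hθ : θ = ((b : K) + ω) / 2)
    (M N : Submodule ℤ K)
    (hM : M = Submodule.span ℤ {(a : K), θ})
    (hN : N = Submodule.span ℤ {(1 : K), θ}) :
    (∀ x ∈ M, θ * x ∈ M) ∧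
      Finite (↥N ⧸ M.comap N.subtype) ∧
      Nat.card (↥N ⧸ M.comap N.subtype) = a.natAbs := by
  subst hM hN
  obtain ⟨c, hc⟩ := hdiv
  have hcK : (b : K) ^ 2 - Δ = 4 * a * c := by exact_mod_cast hc
  have hθsq : θ ^ 2 = b * θ - a * c := by
    rw [hθ]
    linear_combination (1 / 4 : K) * hω - (1 / 4 : K) * hcK
  have hli : LinearIndependent ℤ ![1, θ] := hθ ▸ linearIndependent_one_half_add hω hΔns b
  have hspan : span ℤ {(a : K), θ} = span ℤ {a • (1 : K), θ} := by rw [Int.smul_one_eq_cast]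
  refine ⟨fun _ => mul_mem_span_intCast_pair hθsq, ?_⟩
  rw [hspan]
  exact ⟨finite_spanPairQuotient hli ha, natCard_spanPairQuotient hli a⟩

/-- In a real quadratic field `K = ℚ(√Δ)` with `Δ ≡ 0, 1 (mod 4)`, for integers `a ≠ 0`
and `b` with `4a ∣ b² − Δ` and `θ = (b + √Δ)/2`, the ℤ-module `M` spanned by `{a, θ}`
is closed under multiplication by `θ`, and the quotient of the ℤ-module spanned by
`{1, θ}` by `M` is finite of cardinality `|a|`. -/
theorem ideal_module_index
    (K : Type*) [Field K] [NumberField K]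
    (h2 : Module.finrank ℚ K = 2)
    (Δ : ℤ) (hΔpos : 0 < Δ) (hΔns : ¬ IsSquare Δ)
    (hΔmod : Δ % 4 = 0 ∨ Δ % 4 = 1)
    (ω : K) (hω : ω ^ 2 = (Δ : K))
    (a b : ℤ) (ha : a ≠ 0) (hdiv : 4 * a ∣ b ^ 2 - Δ)
    (θ : K) (hθ : θ = ((b : K) + ω) / 2)
    (M N : Submodule ℤ K)
    (hM : M = Submodule.span ℤ {(a : K), θ})
    (hN : N = Submodule.span ℤ {(1 : K), θ})
    (hMN : M ≤ N) :
    (∀ x ∈ M, θ * x ∈ M) ∧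
      Finite (↥N ⧸ M.comap N.subtype) ∧
      Nat.card (↥N ⧸ M.comap N.subtype) = a.natAbs :=
  ideal_module_index_general K Δ hΔns ω hω a b ha hdiv θ hθ M N hM hN
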